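/- The unsafe-closure of a finite set of faulty nodes in Z×Z decomposes into pairwise disjoint rectangular faulty blocks: each connected component (under the closure relation generated by the marking rules) of the faulty-or-unsafe set is contained in a rectangle all of whose nodes are faulty or unsafe, and distinct components' rectangles do not share boundary nodes. -/

import Mathlib

/-- 1-hop adjacency in the grid. -/
def Adj (u v : ℤ × ℤ) : Prop :=
  |u.1 - v.1| + |u.2 - v.2| = 1

/-- Rule 1: `v` has two distinct faulty-or-unsafe 1-hop neighbors. -/
def Rule1 (X : Set (ℤ × ℤ)) (v : ℤ × ℤ) : Prop :=
  ∃ a b : ℤ × ℤ, a ∈ X ∧ b ∈ X ∧ a ≠ b ∧ Adj a v ∧ Adj b v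

/-- Rule 2: `v` has two faulty-or-unsafe neighbors within 1 or 2 hops lying in
    two different dimensions (one differing in x, one in y). -/
def Rule2 (X : Set (ℤ × ℤ)) (v : ℤ × ℤ) : Prop :=
  ∃ a b : ℤ × ℤ, a ∈ X ∧ b ∈ X ∧
    a.2 = v.2 ∧ 0 < |a.1 - v.1| ∧ |a.1 - v.1| ≤ 2 ∧
    b.1 = v.1 ∧ 0 < |b.2 - v.2| ∧ |b.2 - v.2| ≤ 2

/-- One round of the unsafe-marking process on ℤ × ℤ. -/
def mark (X : Set (ℤ × ℤ)) : Set (ℤ × ℤ) :=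
  X ∪ {v | Rule1 X v ∨ Rule2 X v}

/-- The unsafe-closure of a faulty set F: the least fixed point of repeatedly
    applying the marking rules starting from F. -/
def unsafeClosure (F : Set (ℤ × ℤ)) : Set (ℤ × ℤ) :=
  ⋂₀ {X | F ⊆ X ∧ mark X ⊆ X}

/-- L∞ (Chebyshev) distance on the grid. -/
def chebDist (p q : ℤ × ℤ) : ℤ :=
  max |p.1 - q.1| |p.2 - q.2|

/-- One step of the connectivity relation generated by the marking rules:
    two closure nodes within L∞ distance 2 interact. -/
def CloseStep (C : Set (ℤ × ℤ)) (p q : ℤ × ℤ) : Prop :=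
  p ∈ C ∧ q ∈ C ∧ chebDist p q ≤ 2

/-- The connected component of `p` in the closed set `C`. -/
def component (C : Set (ℤ × ℤ)) (p : ℤ × ℤ) : Set (ℤ × ℤ) :=
  {q | Relation.ReflTransGen (CloseStep C) p q}

/-- An axis-aligned rectangle of the grid. -/
def gridRect (x1 x2 y1 y2 : ℤ) : Set (ℤ × ℤ) :=
  Set.Icc x1 x2 ×ˢ Set.Icc y1 y2

/-- `gridRect x1 x2 y1 y2` is the minimal axis-aligned bounding rectangle of K. -/
def IsBBox (K : Set (ℤ × ℤ)) (x1 x2 y1 y2 : ℤ) : Prop :=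
  K ⊆ gridRect x1 x2 y1 y2 ∧
    ∀ a b c d : ℤ, K ⊆ gridRect a b c d → gridRect x1 x2 y1 y2 ⊆ gridRect a b c d

/-! ### Auxiliary lemmas -/

def ZBtw (a t b : ℤ) : Prop := (a ≤ t ∧ t ≤ b) ∨ (b ≤ t ∧ t ≤ a)

lemma mem_gridRect {a b c d x y : ℤ} :
    (x, y) ∈ gridRect a b c d ↔ a ≤ x ∧ x ≤ b ∧ c ≤ y ∧ y ≤ d := by
  simp only [gridRect, Set.mem_prod, Set.mem_Icc]
  tauto

lemma mark_mono {X Y : Set (ℤ × ℤ)} (h : X ⊆ Y) : mark X ⊆ mark Y := by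
  intro v hv
  simp only [mark, Set.mem_union, Set.mem_setOf_eq] at hv ⊢
  rcases hv with hv | hv | hv
  · exact Or.inl (h hv)
  · obtain ⟨a, b, h1, h2, h3, h4, h5⟩ := hv
    exact Or.inr (Or.inl ⟨a, b, h h1, h h2, h3, h4, h5⟩)
  · obtain ⟨a, b, h1, h2, h3, h4, h5, h6, h7, h8⟩ := hv
    exact Or.inr (Or.inr ⟨a, b, h h1, h h2, h3, h4, h5, h6, h7, h8⟩)

lemma closure_closed (F : Set (ℤ × ℤ)) : mark (unsafeClosure F) ⊆ unsafeClosure F := by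
  intro v hv
  intro X hX
  obtain ⟨hFX, hmX⟩ := hX
  exact hmX (mark_mono (Set.sInter_subset_of_mem
    (show _ ∈ {X | F ⊆ X ∧ mark X ⊆ X} from ⟨hFX, hmX⟩)) hv)

lemma mem_rule1' {C : Set (ℤ × ℤ)} (hC : mark C ⊆ C) {ax ay bx by' vx vy : ℤ}
    (ha : (ax, ay) ∈ C) (hb : (bx, by') ∈ C) (hne : ¬(ax = bx ∧ ay = by'))
    (hA : |ax - vx| + |ay - vy| = 1) (hB : |bx - vx| + |by' - vy| = 1) : (vx, vy) ∈ C := by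
  refine hC (Set.mem_union_right _ (Or.inl ⟨(ax, ay), (bx, by'), ha, hb, ?_, hA, hB⟩))
  intro h
  exact hne (by simpa [Prod.ext_iff] using h)

lemma mem_rule2' {C : Set (ℤ × ℤ)} (hC : mark C ⊆ C) {vx vy ax by' : ℤ}
    (ha : (ax, vy) ∈ C) (hb : (vx, by') ∈ C)
    (h1 : 0 < |ax - vx|) (h2 : |ax - vx| ≤ 2)
    (h3 : 0 < |by' - vy|) (h4 : |by' - vy| ≤ 2) : (vx, vy) ∈ C :=
  hC (Set.mem_union_right _ (Or.inr ⟨(ax, vy), (vx, by'), ha, hb, rfl, h1, h2, rfl, h3, h4⟩))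

lemma segH {C : Set (ℤ × ℤ)} (hC : mark C ⊆ C) {x x' y t : ℤ}
    (hu : (x, y) ∈ C) (hv : (x', y) ∈ C) (hd : |x - x'| ≤ 2) (ht : ZBtw x t x') :
    (t, y) ∈ C := by
  simp only [Int.abs_eq_natAbs] at hd
  unfold ZBtw at ht
  rcases (show t = x ∨ t = x' ∨ (¬(x = x') ∧ (x - t).natAbs = 1 ∧ (x' - t).natAbs = 1) by omega)
    with h | h | ⟨h1, h2, h3⟩
  · exact h ▸ hu
  · exact h ▸ hv
  · exact mem_rule1' hC hu hv (by tauto)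
      (by simp only [Int.abs_eq_natAbs]; omega) (by simp only [Int.abs_eq_natAbs]; omega)

lemma segV {C : Set (ℤ × ℤ)} (hC : mark C ⊆ C) {x y y' t : ℤ}
    (hu : (x, y) ∈ C) (hv : (x, y') ∈ C) (hd : |y - y'| ≤ 2) (ht : ZBtw y t y') :
    (x, t) ∈ C := by
  simp only [Int.abs_eq_natAbs] at hd
  unfold ZBtw at ht
  rcases (show t = y ∨ t = y' ∨ (¬(y = y') ∧ (y - t).natAbs = 1 ∧ (y' - t).natAbs = 1) by omega)
    with h | h | ⟨h1, h2, h3⟩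
  · exact h ▸ hu
  · exact h ▸ hv
  · exact mem_rule1' hC hu hv (by tauto)
      (by simp only [Int.abs_eq_natAbs]; omega) (by simp only [Int.abs_eq_natAbs]; omega)

lemma Lfill {C : Set (ℤ × ℤ)} (hC : mark C ⊆ C) (x1 x0 y0 y1 : ℤ)
    (hH : ∀ r, ZBtw x1 r x0 → (r, y0) ∈ C)
    (hV : ∀ r, ZBtw y0 r y1 → (x0, r) ∈ C) :
    ∀ n : ℕ, ∀ s t, (s - x0).natAbs + (t - y0).natAbs ≤ n →
      ZBtw x1 s x0 → ZBtw y0 t y1 → (s, t) ∈ C := by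
  intro n
  induction n with
  | zero =>
    intro s t hn hs ht
    obtain ⟨h1, h2⟩ : s = x0 ∧ t = y0 := by omega
    rw [h1, h2]
    exact hV y0 (by unfold ZBtw; omega)
  | succ n ih =>
    intro s t hn hs ht
    by_cases hsx : s = x0
    · exact hsx ▸ hV t ht
    by_cases hty : t = y0
    · exact hty ▸ hH s hs
    · have hs' : ZBtw x1 (s + (x0 - s).sign) x0 ∧
          ((s + (x0 - s).sign) - x0).natAbs + 1 = (s - x0).natAbs ∧
          (s + (x0 - s).sign - s).natAbs = 1 := by
        rcases lt_or_gt_of_ne hsx with h | h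
        · rw [Int.sign_eq_one_of_pos (by omega)]
          unfold ZBtw at hs ⊢; omega
        · rw [Int.sign_eq_neg_one_of_neg (by omega)]
          unfold ZBtw at hs ⊢; omega
      have ht' : ZBtw y0 (t + (y0 - t).sign) y1 ∧
          ((t + (y0 - t).sign) - y0).natAbs + 1 = (t - y0).natAbs ∧
          (t + (y0 - t).sign - t).natAbs = 1 := by
        rcases lt_or_gt_of_ne hty with h | h
        · rw [Int.sign_eq_one_of_pos (by omega)]
          unfold ZBtw at ht ⊢; omega
        · rw [Int.sign_eq_neg_one_of_neg (by omega)]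
          unfold ZBtw at ht ⊢; omega
      have ha : (s + (x0 - s).sign, t) ∈ C := ih _ t (by omega) hs'.1 ht
      have hb : (s, t + (y0 - t).sign) ∈ C := ih s _ (by omega) hs ht'.1
      refine mem_rule2' hC ha hb ?_ ?_ ?_ ?_ <;>
        · simp only [Int.abs_eq_natAbs]
          omega

lemma pairFill {C : Set (ℤ × ℤ)} (hC : mark C ⊆ C) {px py qx qy : ℤ}
    (hp : (px, py) ∈ C) (hq : (qx, qy) ∈ C)
    (hdx : |px - qx| ≤ 2) (hdy : |py - qy| ≤ 2) :
    ∀ s t, ZBtw px s qx → ZBtw py t qy → (s, t) ∈ C := by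
  intro s t hs ht
  by_cases hx : px = qx
  · have h1 : s = px := by unfold ZBtw at hs; omega
    rw [h1]
    exact segV hC hp (hx ▸ hq) hdy ht
  by_cases hy : py = qy
  · have h1 : t = py := by unfold ZBtw at ht; omega
    rw [h1]
    exact segH hC hp (hy ▸ hq) hdx hs
  · have hr : (qx, py) ∈ C := by
      refine mem_rule2' hC hp hq ?_ hdx ?_ (by rwa [abs_sub_comm] at hdy) <;>
        · simp only [Int.abs_eq_natAbs]; omega
    exact Lfill hC px qx py qy (fun r h => segH hC hp hr hdx h)
      (fun r h => segV hC hr hq hdy h) _ s t le_rfl hs ht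

lemma mergeFill {C : Set (ℤ × ℤ)} (hC : mark C ⊆ C) {a1 b1 a2 b2 c1 d1 c2 d2 w1 w2 : ℤ}
    (h1 : ∀ s t, ZBtw a1 s a2 → ZBtw b1 t b2 → (s, t) ∈ C)
    (h2 : ∀ s t, ZBtw c1 s c2 → ZBtw d1 t d2 → (s, t) ∈ C)
    (hwa : ZBtw a1 w1 a2) (hwb : ZBtw b1 w2 b2)
    (hwc : ZBtw c1 w1 c2) (hwd : ZBtw d1 w2 d2) :
    ∀ s t, (ZBtw a1 s a2 ∨ ZBtw c1 s c2) → (ZBtw b1 t b2 ∨ ZBtw d1 t d2) →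
      (s, t) ∈ C := by
  intro s t hs ht
  rcases hs with hs | hs <;> rcases ht with ht | ht
  · exact h1 s t hs ht
  · -- s in rect 1's x-range, t in rect 2's y-range
    refine Lfill hC s w1 w2 t
      (fun r h => h1 r w2 (by unfold ZBtw at *; omega) hwb)
      (fun r h => h2 w1 r hwc (by unfold ZBtw at *; omega)) _ s t le_rfl
      (by unfold ZBtw; omega) (by unfold ZBtw; omega)
  · refine Lfill hC s w1 w2 t
      (fun r h => h2 r w2 (by unfold ZBtw at *; omega) hwd)
      (fun r h => h1 w1 r hwa (by unfold ZBtw at *; omega)) _ s t le_rfl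
      (by unfold ZBtw; omega) (by unfold ZBtw; omega)
  · exact h2 s t hs ht

lemma cheb_le_iff {p q : ℤ × ℤ} : chebDist p q ≤ 2 ↔ |p.1 - q.1| ≤ 2 ∧ |p.2 - q.2| ≤ 2 := by
  unfold chebDist
  exact max_le_iff

lemma chainFill {C : Set (ℤ × ℤ)} (hC : mark C ⊆ C) {p q : ℤ × ℤ} (hp : p ∈ C)
    (h : Relation.ReflTransGen (CloseStep C) p q) :
    ∀ s t, ZBtw p.1 s q.1 → ZBtw p.2 t q.2 → (s, t) ∈ C := by
  induction h with
  | refl =>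
    intro s t hs ht
    have h1 : s = p.1 := by unfold ZBtw at hs; omega
    have h2 : t = p.2 := by unfold ZBtw at ht; omega
    rw [h1, h2]
    simpa using hp
  | @tail b c hpb hbc ih =>
    intro s t hs ht
    obtain ⟨hbC, hcC, hcheb⟩ := hbc
    obtain ⟨hd1, hd2⟩ := cheb_le_iff.mp hcheb
    have hpf : ∀ s t, ZBtw b.1 s c.1 → ZBtw b.2 t c.2 → (s, t) ∈ C := by
      intro s t hs ht
      exact pairFill hC (by simpa using hbC) (by simpa using hcC) hd1 hd2 s t hs ht
    exact mergeFill hC (w1 := b.1) (w2 := b.2) ih hpf (by unfold ZBtw; omega) (by unfold ZBtw; omega)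
      (by unfold ZBtw; omega) (by unfold ZBtw; omega) s t
      (by unfold ZBtw at *; omega) (by unfold ZBtw at *; omega)

lemma rect_mark_closed (a b c d : ℤ) : mark (gridRect a b c d) ⊆ gridRect a b c d := by
  intro v hv
  simp only [mark, Set.mem_union, Set.mem_setOf_eq] at hv
  obtain ⟨vx, vy⟩ := v
  rcases hv with hv | hv | hv
  · exact hv
  · obtain ⟨⟨ax, ay⟩, ⟨bx, by'⟩, h1, h2, h3, h4, h5⟩ := hv
    rw [mem_gridRect] at h1 h2 ⊢
    rw [Ne, Prod.mk.injEq, not_and_or] at h3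
    simp only [Adj, Int.abs_eq_natAbs] at h4 h5
    omega
  · obtain ⟨⟨ax, ay⟩, ⟨bx, by'⟩, h1, h2, h3, h4, h5, h6, h7, h8⟩ := hv
    rw [mem_gridRect] at h1 h2 ⊢
    simp only [Int.abs_eq_natAbs] at h4 h5 h7 h8
    simp only at h3 h6
    omega

lemma closure_subset_rect {F : Set (ℤ × ℤ)} {a b c d : ℤ} (hF : F ⊆ gridRect a b c d) :
    unsafeClosure F ⊆ gridRect a b c d :=
  Set.sInter_subset_of_mem (show _ ∈ {X | F ⊆ X ∧ mark X ⊆ X} from ⟨hF, rect_mark_closed a b c d⟩)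

lemma closure_finite {F : Set (ℤ × ℤ)} (hF : F.Finite) : (unsafeClosure F).Finite := by
  obtain ⟨a, ha⟩ := (hF.image Prod.fst).bddBelow
  obtain ⟨b, hb⟩ := (hF.image Prod.fst).bddAbove
  obtain ⟨c, hc⟩ := (hF.image Prod.snd).bddBelow
  obtain ⟨d, hd⟩ := (hF.image Prod.snd).bddAbove
  have hsub : F ⊆ gridRect a b c d := by
    rintro ⟨x, y⟩ hxy
    rw [mem_gridRect]
    exact ⟨ha ⟨(x, y), hxy, rfl⟩, hb ⟨(x, y), hxy, rfl⟩, hc ⟨(x, y), hxy, rfl⟩, hd ⟨(x, y), hxy, rfl⟩⟩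
  exact (((Set.finite_Icc a b).prod (Set.finite_Icc c d)).subset (closure_subset_rect hsub))

lemma component_subset {C : Set (ℤ × ℤ)} {p : ℤ × ℤ} (hp : p ∈ C) :
    component C p ⊆ C := by
  intro q hq
  rcases (Relation.ReflTransGen.cases_tail hq) with h | ⟨c, _, hc⟩
  · exact h ▸ hp
  · exact hc.2.1

lemma closeStep_symm {C : Set (ℤ × ℤ)} : Symmetric (CloseStep C) := by
  rintro p q ⟨h1, h2, h3⟩
  refine ⟨h2, h1, ?_⟩
  unfold chebDist at h3 ⊢
  rw [abs_sub_comm q.1 p.1, abs_sub_comm q.2 p.2]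
  exact h3

lemma rectConn {C : Set (ℤ × ℤ)} {x1 x2 y1 y2 : ℤ}
    (hsub : gridRect x1 x2 y1 y2 ⊆ C) :
    ∀ n : ℕ, ∀ ux uy vx vy : ℤ, (ux - vx).natAbs + (uy - vy).natAbs ≤ n →
      (ux, uy) ∈ gridRect x1 x2 y1 y2 → (vx, vy) ∈ gridRect x1 x2 y1 y2 →
      Relation.ReflTransGen (CloseStep C) (ux, uy) (vx, vy) := by
  intro n
  induction n with
  | zero =>
    intro ux uy vx vy hn hu hv
    obtain ⟨h1, h2⟩ : ux = vx ∧ uy = vy := by omega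
    rw [h1, h2]
  | succ n ih =>
    intro ux uy vx vy hn hu hv
    by_cases hx : ux = vx
    · by_cases hy : uy = vy
      · rw [hx, hy]
      · have hv' : (vx, vy + (uy - vy).sign) ∈ gridRect x1 x2 y1 y2 ∧
            (uy - (vy + (uy - vy).sign)).natAbs + 1 = (uy - vy).natAbs ∧
            (vy + (uy - vy).sign - vy).natAbs = 1 := by
          rw [mem_gridRect] at hu hv ⊢
          rcases lt_or_gt_of_ne hy with h | h
          · rw [Int.sign_eq_neg_one_of_neg (by omega)]; omega
          · rw [Int.sign_eq_one_of_pos (by omega)]; omega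
        refine Relation.ReflTransGen.tail (ih ux uy vx _ (by omega) hu hv'.1) ?_
        refine ⟨hsub hv'.1, hsub hv, cheb_le_iff.mpr ⟨?_, ?_⟩⟩ <;>
          · simp only [Int.abs_eq_natAbs]
            have := hv'.2
            omega
    · have hv' : (vx + (ux - vx).sign, vy) ∈ gridRect x1 x2 y1 y2 ∧
          (ux - (vx + (ux - vx).sign)).natAbs + 1 = (ux - vx).natAbs ∧
          (vx + (ux - vx).sign - vx).natAbs = 1 := by
        rw [mem_gridRect] at hu hv ⊢
        rcases lt_or_gt_of_ne hx with h | h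
        · rw [Int.sign_eq_neg_one_of_neg (by omega)]; omega
        · rw [Int.sign_eq_one_of_pos (by omega)]; omega
      refine Relation.ReflTransGen.tail (ih ux uy _ vy (by omega) hu hv'.1) ?_
      refine ⟨hsub hv'.1, hsub hv, cheb_le_iff.mpr ⟨?_, ?_⟩⟩ <;>
        · simp only [Int.abs_eq_natAbs]
          have := hv'.2
          omega

lemma exists_bbox {C : Set (ℤ × ℤ)} (hC : mark C ⊆ C) (hfin : C.Finite) {p : ℤ × ℤ}
    (hp : p ∈ C) :
    ∃ x1 x2 y1 y2 : ℤ, IsBBox (component C p) x1 x2 y1 y2 ∧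
      gridRect x1 x2 y1 y2 ⊆ C := by
  have hKC : component C p ⊆ C := component_subset hp
  have hKfin : (component C p).Finite := hfin.subset hKC
  have hpK : p ∈ component C p := Relation.ReflTransGen.refl
  set K := hKfin.toFinset with hKdef
  have hmem : ∀ q, q ∈ K ↔ q ∈ component C p := fun q => hKfin.mem_toFinset
  set X := K.image Prod.fst with hXdef
  set Y := K.image Prod.snd with hYdef
  have hXne : X.Nonempty := ⟨p.1, Finset.mem_image.mpr ⟨p, (hmem p).mpr hpK, rfl⟩⟩
  have hYne : Y.Nonempty := ⟨p.2, Finset.mem_image.mpr ⟨p, (hmem p).mpr hpK, rfl⟩⟩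
  set xmin := X.min' hXne
  set xmax := X.max' hXne
  set ymin := Y.min' hYne
  set ymax := Y.max' hYne
  have hxlo : ∀ q ∈ component C p, xmin ≤ q.1 := fun q hq =>
    X.min'_le q.1 (Finset.mem_image.mpr ⟨q, (hmem q).mpr hq, rfl⟩)
  have hxhi : ∀ q ∈ component C p, q.1 ≤ xmax := fun q hq =>
    X.le_max' q.1 (Finset.mem_image.mpr ⟨q, (hmem q).mpr hq, rfl⟩)
  have hylo : ∀ q ∈ component C p, ymin ≤ q.2 := fun q hq =>
    Y.min'_le q.2 (Finset.mem_image.mpr ⟨q, (hmem q).mpr hq, rfl⟩)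
  have hyhi : ∀ q ∈ component C p, q.2 ≤ ymax := fun q hq =>
    Y.le_max' q.2 (Finset.mem_image.mpr ⟨q, (hmem q).mpr hq, rfl⟩)
  obtain ⟨q1, hq1K, hq1⟩ := Finset.mem_image.mp (X.min'_mem hXne)
  obtain ⟨q2, hq2K, hq2⟩ := Finset.mem_image.mp (X.max'_mem hXne)
  obtain ⟨q3, hq3K, hq3⟩ := Finset.mem_image.mp (Y.min'_mem hYne)
  obtain ⟨q4, hq4K, hq4⟩ := Finset.mem_image.mp (Y.max'_mem hYne)
  have hq1c : q1 ∈ component C p := (hmem q1).mp hq1K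
  have hq2c : q2 ∈ component C p := (hmem q2).mp hq2K
  have hq3c : q3 ∈ component C p := (hmem q3).mp hq3K
  have hq4c : q4 ∈ component C p := (hmem q4).mp hq4K
  -- the bounding-rectangle row through p and column through p are in C
  have G1 := mergeFill hC (w1 := p.1) (w2 := p.2) (chainFill hC hp hq1c) (chainFill hC hp hq2c)
    (by unfold ZBtw; omega) (by unfold ZBtw; omega) (by unfold ZBtw; omega) (by unfold ZBtw; omega)
  have G2 := mergeFill hC (w1 := p.1) (w2 := p.2) (chainFill hC hp hq3c) (chainFill hC hp hq4c)
    (by unfold ZBtw; omega) (by unfold ZBtw; omega) (by unfold ZBtw; omega) (by unfold ZBtw; omega)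
  have hpx1 : xmin ≤ p.1 := hxlo p hpK
  have hpx2 : p.1 ≤ xmax := hxhi p hpK
  have hpy1 : ymin ≤ p.2 := hylo p hpK
  have hpy2 : p.2 ≤ ymax := hyhi p hpK
  have hq1x1 : xmin ≤ q1.1 ∧ q1.1 ≤ xmax := ⟨hxlo q1 hq1c, hxhi q1 hq1c⟩
  have hq2x : xmin ≤ q2.1 ∧ q2.1 ≤ xmax := ⟨hxlo q2 hq2c, hxhi q2 hq2c⟩
  have hq3y : ymin ≤ q3.2 ∧ q3.2 ≤ ymax := ⟨hylo q3 hq3c, hyhi q3 hq3c⟩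
  have hq4y : ymin ≤ q4.2 ∧ q4.2 ≤ ymax := ⟨hylo q4 hq4c, hyhi q4 hq4c⟩
  have row : ∀ r, xmin ≤ r → r ≤ xmax → (r, p.2) ∈ C := fun r h1 h2 =>
    G1 r p.2 (by unfold ZBtw; omega) (Or.inl (by unfold ZBtw; omega))
  have col : ∀ r, ymin ≤ r → r ≤ ymax → (p.1, r) ∈ C := fun r h1 h2 =>
    G2 p.1 r (Or.inl (by unfold ZBtw; omega)) (by unfold ZBtw; omega)
  have hrect : gridRect xmin xmax ymin ymax ⊆ C := by
    rintro ⟨s, t⟩ hst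
    rw [mem_gridRect] at hst
    exact Lfill hC s p.1 p.2 t
      (fun r h => row r (by unfold ZBtw at h; omega) (by unfold ZBtw at h; omega))
      (fun r h => col r (by unfold ZBtw at h; omega) (by unfold ZBtw at h; omega))
      _ s t le_rfl (by unfold ZBtw; omega) (by unfold ZBtw; omega)
  refine ⟨xmin, xmax, ymin, ymax, ⟨?_, ?_⟩, hrect⟩
  · rintro ⟨qx, qy⟩ hq
    rw [mem_gridRect]
    exact ⟨hxlo _ hq, hxhi _ hq, hylo _ hq, hyhi _ hq⟩
  · intro a b c d hsub2
    have hA := hsub2 hq1c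
    have hB := hsub2 hq2c
    have hC' := hsub2 hq3c
    have hD := hsub2 hq4c
    obtain ⟨q1x, q1y⟩ := q1
    obtain ⟨q2x, q2y⟩ := q2
    obtain ⟨q3x, q3y⟩ := q3
    obtain ⟨q4x, q4y⟩ := q4
    rw [mem_gridRect] at hA hB hC' hD
    rintro ⟨s, t⟩ hst
    rw [mem_gridRect] at hst ⊢
    simp only at hq1 hq2 hq3 hq4
    omega

/-- The unsafe-closure of a finite faulty set decomposes into pairwise
    disjoint rectangular faulty blocks: assuming distinct components of the
    closure are at L∞ distance greater than 2, each connected component of the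
    faulty-or-unsafe set has a minimal bounding rectangle all of whose nodes
    are faulty or unsafe, and the rectangles of distinct components are
    disjoint (they share no nodes). -/
theorem closure_decomposes_into_faulty_blocks (F : Set (ℤ × ℤ)) (hF : F.Finite)
    (hsep : ∀ p ∈ unsafeClosure F, ∀ q ∈ unsafeClosure F,
      ¬ Relation.ReflTransGen (CloseStep (unsafeClosure F)) p q → 2 < chebDist p q) :
    (∀ p ∈ unsafeClosure F, ∃ x1 x2 y1 y2 : ℤ,
      IsBBox (component (unsafeClosure F) p) x1 x2 y1 y2 ∧
      gridRect x1 x2 y1 y2 ⊆ unsafeClosure F) ∧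
    (∀ p ∈ unsafeClosure F, ∀ q ∈ unsafeClosure F,
      ¬ Relation.ReflTransGen (CloseStep (unsafeClosure F)) p q →
      ∀ x1 x2 y1 y2 a b c d : ℤ,
        IsBBox (component (unsafeClosure F) p) x1 x2 y1 y2 →
        IsBBox (component (unsafeClosure F) q) a b c d →
        gridRect x1 x2 y1 y2 ∩ gridRect a b c d = ∅) := by
  have hC := closure_closed F
  have hfin := closure_finite hF
  constructor
  · intro p hp
    exact exists_bbox hC hfin hp
  · intro p hp q hq hnconn x1 x2 y1 y2 a b c d hbp hbq
    obtain ⟨m1, m2, n1, n2, hbb1, hrc1⟩ := exists_bbox hC hfin hp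
    obtain ⟨m1', m2', n1', n2', hbb2, hrc2⟩ := exists_bbox hC hfin hq
    have hrp : gridRect x1 x2 y1 y2 ⊆ unsafeClosure F :=
      (hbp.2 m1 m2 n1 n2 hbb1.1).trans hrc1
    have hrq : gridRect a b c d ⊆ unsafeClosure F :=
      (hbq.2 m1' m2' n1' n2' hbb2.1).trans hrc2
    rw [Set.eq_empty_iff_forall_notMem]
    rintro ⟨zx, zy⟩ ⟨hz1, hz2⟩
    have hpr : p ∈ gridRect x1 x2 y1 y2 := hbp.1 Relation.ReflTransGen.refl
    have hqr : q ∈ gridRect a b c d := hbq.1 Relation.ReflTransGen.refl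
    have h1 : Relation.ReflTransGen (CloseStep (unsafeClosure F)) p (zx, zy) := by
      have := rectConn hrp _ p.1 p.2 zx zy le_rfl (by simpa using hpr) hz1
      simpa using this
    have h2 : Relation.ReflTransGen (CloseStep (unsafeClosure F)) q (zx, zy) := by
      have := rectConn hrq _ q.1 q.2 zx zy le_rfl (by simpa using hqr) hz2
      simpa using this
    exact hnconn (h1.trans ((@Relation.ReflTransGen.symmetric _ _ ⟨fun _ _ h => closeStep_symm h⟩).symm _ _ h2))
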